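/- Let f(q) = ∑_{n=0}^∞ qⁿ aₙ and g(q) = ∑_{n=0}^∞ qⁿ bₙ be convergent quaternionic power series on 𝔹⁴ such that the vector parts {Im(bₙ) : n ≥ 0} span ℝ³. Suppose there exist distinct non-antipodal i, i' ∈ 𝕊², orthogonal complements j ⊥ i, j' ⊥ i', and constants c ∈ ℂ(i), c' ∈ ℂ(i') with 2f = (1+c)g + i(1−c)g i on ℂ(i) ∩ 𝔹⁴ and 2f = (1+c')g + i'(1−c')g i' on ℂ(i') ∩ 𝔹⁴. Then f = g on 𝔹⁴. -/

import Mathlib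

open Quaternion

open Filter Topology

/-!
Comparing coefficients along the real axis turns the slice identity for `(i, c)` into
`(1 - c) (bₙ - i bₙ i) = 2 (bₙ - aₙ)`. Both factors on the left commute with `i`, so `bₙ - aₙ`
commutes with `i`, and likewise with `i'`; as `i` and `i'` are linearly independent,
`bₙ - aₙ = ρₙ` is real. If `c ≠ 1` and `c' ≠ 1`, solving for `bₙ - i bₙ i` shows that the
`i`-component of `Im bₙ` is `ρₙ κ` for a constant `κ`, and similarly the `i'`-component is
`ρₙ κ'`. A fixed nonzero vector of `span {i, i'}` is then orthogonal to every `Im bₙ`, which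
contradicts the spanning hypothesis. Hence `c = 1` or `c' = 1`, and either one forces `aₙ = bₙ`.
-/

section PowerSeries

variable {𝕜 E F G : Type*} [NontriviallyNormedField 𝕜]
  [NormedAddCommGroup E] [NormedSpace 𝕜 E] [CompleteSpace E]
  [NormedAddCommGroup F] [NormedSpace 𝕜 F] [CompleteSpace F]
  [NormedAddCommGroup G] [NormedSpace 𝕜 G] [CompleteSpace G]

theorem summable_pow_smul_of_summable_norm_mul_pow {e : ℕ → E} {r : ℝ}
    (hs : Summable fun n => ‖e n‖ * r ^ n) {x : 𝕜} (hx : ‖x‖ ≤ r) :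
    Summable fun n => x ^ n • e n :=
  .of_norm_bounded hs fun n => by
    rw [norm_smul, norm_pow, mul_comm]
    gcongr

theorem eq_zero_of_tsum_pow_smul_eventually_eq_zero {e : ℕ → G} {r : NNReal} (hr : 0 < r)
    (hs : Summable fun n => ‖e n‖ * (r : ℝ) ^ n)
    (h : ∀ᶠ x in 𝓝 (0 : 𝕜), ∑' n, x ^ n • e n = 0) : e = 0 := by
  let p : FormalMultilinearSeries 𝕜 𝕜 G := fun n => .mkPiRing 𝕜 (Fin n) (e n)
  have hrad : (r : ENNReal) ≤ p.radius :=
    p.le_radius_of_summable_norm (by simpa [p, ContinuousMultilinearMap.norm_mkPiRing] using hs)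
  have hsum : p.sum = fun x => ∑' n, x ^ n • e n := by
    ext x
    simp [p, FormalMultilinearSeries.sum, ContinuousMultilinearMap.mkPiRing_apply]
  have hp : p = 0 := by
    refine ((p.hasFPowerSeriesOnBall ?_).hasFPowerSeriesAt).eq_zero_of_eventually ?_
    · exact lt_of_lt_of_le (ENNReal.coe_pos.mpr hr) hrad
    · rw [hsum]; exact h
  funext n
  simpa [p, ContinuousMultilinearMap.mkPiRing_apply] using congr($hp n fun _ => 1)

theorem apply_eq_apply_of_tsum_pow_smul_eventually_eq (S : E →L[𝕜] G) (T : F →L[𝕜] G)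
    {a : ℕ → E} {b : ℕ → F} {r : NNReal} (hr : 0 < r)
    (ha : Summable fun n => ‖a n‖ * (r : ℝ) ^ n) (hb : Summable fun n => ‖b n‖ * (r : ℝ) ^ n)
    (h : ∀ᶠ x in 𝓝 (0 : 𝕜), S (∑' n, x ^ n • a n) = T (∑' n, x ^ n • b n)) :
    ∀ n, S (a n) = T (b n) := by
  have hs : Summable fun n => ‖S (a n) - T (b n)‖ * (r : ℝ) ^ n := by
    refine .of_nonneg_of_le (fun n => by positivity) (fun n => ?_)
      ((ha.mul_left ‖S‖).add (hb.mul_left ‖T‖))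
    have := (norm_sub_le _ _).trans (add_le_add (S.le_opNorm (a n)) (T.le_opNorm (b n)))
    nlinarith [pow_nonneg r.coe_nonneg n]
  have hzero := eq_zero_of_tsum_pow_smul_eventually_eq_zero hr hs <| by
    filter_upwards [h, Metric.closedBall_mem_nhds (0 : 𝕜) (NNReal.coe_pos.mpr hr)] with x hx hxr
    rw [mem_closedBall_zero_iff] at hxr
    have hsa := summable_pow_smul_of_summable_norm_mul_pow ha hxr
    have hsb := summable_pow_smul_of_summable_norm_mul_pow hb hxr
    simp only [smul_sub, ← map_smul]
    rw [(hsa.mapL S).tsum_sub (hsb.mapL T), ← S.map_tsum hsa, ← T.map_tsum hsb, hx, sub_self]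
  exact fun n => sub_eq_zero.mp (congr_fun hzero n)

end PowerSeries

theorem linearIndependent_pair_of_norm_eq_one {E : Type*} [NormedAddCommGroup E]
    [NormedSpace ℝ E] {x y : E} (hx : ‖x‖ = 1) (hy : ‖y‖ = 1) (hxy : x ≠ y) (hxy' : x ≠ -y) :
    LinearIndependent ℝ ![x, y] := by
  rw [LinearIndependent.pair_iff' (norm_ne_zero_iff.mp (hx ▸ one_ne_zero))]
  rintro t rfl
  rw [norm_smul, hx, mul_one, Real.norm_eq_abs] at hy
  rcases abs_eq zero_le_one |>.mp hy with rfl | rfl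
  · exact hxy (one_smul ℝ x).symm
  · exact hxy' (by rw [neg_one_smul, neg_neg])

section Ring

variable {R : Type*} [Ring R] {p q a c : R}

theorem commute_sub_mul_mul_self (hp : p * p = -1) : Commute p (q - p * q * p) := by
  have h1 : p * (p * q * p) = -(q * p) := by rw [← mul_assoc, ← mul_assoc, hp]; noncomm_ring
  have h2 : p * q * p * p = -(p * q) := by rw [mul_assoc _ p p, hp]; noncomm_ring
  show p * (q - p * q * p) = (q - p * q * p) * p
  rw [mul_sub, sub_mul, h1, h2]; abel

theorem commute_of_mem_span_one_self {K : Type*} [CommSemiring K] [Algebra K R]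
    (hc : c ∈ Submodule.span K {1, p}) :
    Commute p c := by
  obtain ⟨s, t, rfl⟩ := Submodule.mem_span_pair.mp hc
  exact ((Commute.one_right p).smul_right s).add_right ((Commute.refl p).smul_right t)

theorem one_sub_mul_sub_mul_mul_self (hc : Commute p c)
    (h : 2 * a = (1 + c) * q + p * ((1 - c) * q) * p) :
    (1 - c) * (q - p * q * p) = 2 * (q - a) := by
  rw [mul_sub 2, h, ← mul_assoc p, ((Commute.one_right p).sub_right hc).eq]
  noncomm_ring

end Ring

namespace Quaternion

instance : CharZero ℍ[ℝ] :=
  charZero_of_injective_algebraMap (FaithfulSMul.algebraMap_injective ℝ ℍ[ℝ])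

theorem re_mul_comm {R : Type*} [CommRing R] (p q : ℍ[R]) : (p * q).re = (q * p).re := by
  simp only [re_mul]; ring

theorem re_sub_mul_mul_self_mul {R : Type*} [CommRing R] {p q : ℍ[R]} (hp : p * p = -1) :
    ((q - p * q * p) * p).re = 2 * (q * p).re := by
  rw [sub_mul, mul_assoc _ p p, hp, mul_neg_one, re_sub, re_neg, re_mul_comm p q]
  ring

variable {p q : ℍ[ℝ]}

theorem mul_self_eq_neg_one (hp : p.re = 0) (hn : ‖p‖ = 1) : p * p = -1 := by
  have hstar : star p = -p := star_eq_neg.mpr hp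
  rw [← neg_neg (p * p), ← mul_neg, ← hstar, self_mul_star, normSq_eq_norm_mul_self, hn]
  simp

theorem exists_im_eq_smul_of_commute (hp : p.re = 0) (hn : ‖p‖ = 1) (h : Commute p q) :
    ∃ t : ℝ, q.im = t • p := by
  have hu : Commute p q.im := by
    rw [← sub_eq_of_eq_add' (re_add_im q).symm]
    exact h.sub_right (coe_commutes q.re p).symm
  have hreal : p * q.im = (p * q.im).re := by
    rw [← star_eq_self, star_mul, star_im, star_eq_neg.mpr hp, neg_mul_neg, hu.eq]
  refine ⟨-(p * q.im).re, ?_⟩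
  calc q.im = -(p * (p * q.im)) := by rw [← mul_assoc, mul_self_eq_neg_one hp hn]; noncomm_ring
    _ = -(p * q.im).re • p := by rw [hreal, mul_coe_eq_smul, neg_smul, re_coe]

theorem eq_re_of_commute_of_commute {p' : ℍ[ℝ]} (hp : p.re = 0) (hn : ‖p‖ = 1)
    (hp' : p'.re = 0) (hn' : ‖p'‖ = 1) (hind : LinearIndependent ℝ ![p, p'])
    (h : Commute p q) (h' : Commute p' q) : q = q.re := by
  obtain ⟨t, ht⟩ := exists_im_eq_smul_of_commute hp hn h
  obtain ⟨t', ht'⟩ := exists_im_eq_smul_of_commute hp' hn' h'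
  have ht0 : t = 0 := (LinearIndependent.pair_iff.mp hind t (-t') (by
    rw [neg_smul, ← ht, ← ht', add_neg_cancel])).1
  rw [← re_add_im q, ht, ht0, zero_smul, add_zero, re_coe]

-- For pure `ξ`, `(x * ξ).re` is minus the inner product of `Im x` and `ξ` in `ℝ³`.
theorem eq_zero_of_forall_re_mul_eq_zero {ι : Type*} {b : ι → ℍ[ℝ]} {ξ : ℍ[ℝ]} (hξ : ξ.re = 0)
    (hspan : ξ ∈ Submodule.span ℝ (Set.range fun n => (b n).im))
    (h : ∀ n, (b n * ξ).re = 0) : ξ = 0 := by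
  let f : ℍ[ℝ] →ₗ[ℝ] ℝ := (QuaternionAlgebra.reₗ _ _ _).comp (LinearMap.mulRight ℝ ξ)
  have hker : Submodule.span ℝ (Set.range fun n => (b n).im) ≤ LinearMap.ker f := by
    rw [Submodule.span_le]
    rintro _ ⟨n, rfl⟩
    have : ((b n).im * ξ).re = (b n * ξ).re := by
      conv_rhs => rw [← re_add_im (b n)]
      rw [add_mul, re_add, coe_mul_eq_smul, re_smul, hξ, smul_zero, zero_add]
    rw [SetLike.mem_coe, LinearMap.mem_ker, ← h n, ← this]
    rfl
  have hsq : (ξ * ξ).re = 0 := hker hspan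
  rw [← neg_neg (ξ * ξ), ← mul_neg, ← star_eq_neg.mpr hξ, self_mul_star, re_neg, re_coe,
    neg_eq_zero, normSq_eq_zero] at hsq
  exact hsq

section Slice

variable {p c a q : ℍ[ℝ]}

theorem commute_sub_of_slice (hp : p * p = -1) (hc : Commute p c)
    (h : 2 * a = (1 + c) * q + p * ((1 - c) * q) * p) : Commute p (q - a) := by
  have h2 : Commute p (2 * (q - a)) := one_sub_mul_sub_mul_mul_self hc h ▸
    ((Commute.one_right p).sub_right hc).mul_right (commute_sub_mul_mul_self hp)
  rw [← inv_mul_cancel_left₀ two_ne_zero (q - a)]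
  exact (Commute.ofNat_right p 2).inv_right₀.mul_right h2

theorem re_mul_eq_of_slice (hp : p * p = -1) (hc : Commute p c) (hc1 : c ≠ 1)
    (h : 2 * a = (1 + c) * q + p * ((1 - c) * q) * p) (hreal : q - a = (q - a).re) :
    (q * p).re = (q - a).re * ((1 - c)⁻¹ * p).re := by
  set r := (q - a).re
  have hD : q - p * q * p = (r + r) • (1 - c)⁻¹ := by
    rw [← inv_mul_cancel_left₀ (sub_ne_zero.mpr hc1.symm) (q - p * q * p),
      one_sub_mul_sub_mul_mul_self hc h, hreal, two_mul, ← coe_add, mul_coe_eq_smul]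
  have := re_sub_mul_mul_self_mul hp (q := q)
  rw [hD, smul_mul_assoc, re_smul, smul_eq_mul] at this
  linarith

end Slice

theorem two_mul_eq_of_slice {a b : ℕ → ℍ[ℝ]}
    (ha : ∀ r : ℝ, 0 ≤ r → r < 1 → Summable fun n : ℕ => ‖a n‖ * r ^ n)
    (hb : ∀ r : ℝ, 0 ≤ r → r < 1 → Summable fun n : ℕ => ‖b n‖ * r ^ n) {p c : ℍ[ℝ]}
    (h : ∀ x y : ℝ, ‖(x : ℍ[ℝ]) + (y : ℍ[ℝ]) * p‖ < 1 →
      2 * (∑' n : ℕ, ((x : ℍ[ℝ]) + (y : ℍ[ℝ]) * p) ^ n * a n) =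
        (1 + c) * (∑' n : ℕ, ((x : ℍ[ℝ]) + (y : ℍ[ℝ]) * p) ^ n * b n) +
        p * ((1 - c) * (∑' n : ℕ, ((x : ℍ[ℝ]) + (y : ℍ[ℝ]) * p) ^ n * b n)) * p) (n : ℕ) :
    2 * a n = (1 + c) * b n + p * ((1 - c) * b n) * p := by
  refine apply_eq_apply_of_tsum_pow_smul_eventually_eq (𝕜 := ℝ) (r := 2⁻¹)
    (ContinuousLinearMap.mul ℝ ℍ[ℝ] 2)
    (ContinuousLinearMap.mul ℝ _ (1 + c) +
      (ContinuousLinearMap.mulLeftRight ℝ _ p p).comp (ContinuousLinearMap.mul ℝ _ (1 - c)))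
    (by norm_num) (by simpa using ha 2⁻¹ (by norm_num) (by norm_num))
    (by simpa using hb 2⁻¹ (by norm_num) (by norm_num)) ?_ n
  filter_upwards [Metric.ball_mem_nhds (0 : ℝ) one_pos] with x hx
  have := h x 0 (by simpa using hx)
  simp only [coe_zero, zero_mul, add_zero, ← coe_pow, coe_mul_eq_smul] at this
  simpa only [add_apply, ContinuousLinearMap.mul_apply',
    ContinuousLinearMap.comp_apply, ContinuousLinearMap.mulLeftRight_apply] using this

theorem not_forall_re_mul_eq_mul {b : ℕ → ℍ[ℝ]}
    (hspan : ∀ x : ℍ[ℝ], x.re = 0 → x ∈ Submodule.span ℝ (Set.range fun n : ℕ => (b n).im))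
    {p p' : ℍ[ℝ]} (hp : p.re = 0) (hp' : p'.re = 0) (hind : LinearIndependent ℝ ![p, p'])
    (ρ : ℕ → ℝ) (κ κ' : ℝ) : ¬ ∀ n, (b n * p).re = ρ n * κ ∧ (b n * p').re = ρ n * κ' := by
  intro h
  obtain ⟨s, t, hst, hκ⟩ : ∃ s t : ℝ, (s ≠ 0 ∨ t ≠ 0) ∧ s * κ + t * κ' = 0 := by
    by_cases hκ : κ = 0 ∧ κ' = 0
    · exact ⟨1, 0, Or.inl one_ne_zero, by simp [hκ.1]⟩
    · exact ⟨κ', -κ, by rw [neg_ne_zero]; tauto, by ring⟩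
  have hξ : s • p + t • p' = 0 := by
    refine eq_zero_of_forall_re_mul_eq_zero (by simp [hp, hp']) (hspan _ (by simp [hp, hp']))
      fun n => ?_
    simp only [mul_add, mul_smul_comm, re_add, re_smul, smul_eq_mul, (h n).1, (h n).2]
    linear_combination ρ n * hκ
  obtain ⟨rfl, rfl⟩ := LinearIndependent.pair_iff.mp hind s t hξ
  simp at hst

end Quaternion

theorem stmt_19_general (a b : ℕ → ℍ[ℝ])
    (ha : ∀ r : ℝ, 0 ≤ r → r < 1 → Summable fun n : ℕ => ‖a n‖ * r ^ n)
    (hb : ∀ r : ℝ, 0 ≤ r → r < 1 → Summable fun n : ℕ => ‖b n‖ * r ^ n)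
    (hspan : ∀ x : ℍ[ℝ], x.re = 0 →
      x ∈ Submodule.span ℝ (Set.range fun n : ℕ => (b n).im))
    (i i' : ℍ[ℝ]) (hi : i.re = 0) (hni : ‖i‖ = 1)
    (hi' : i'.re = 0) (hni' : ‖i'‖ = 1) (hne : i ≠ i') (hne' : i ≠ -i')
    (c c' : ℍ[ℝ]) (hc : c ∈ Submodule.span ℝ ({1, i} : Set ℍ[ℝ]))
    (hc' : c' ∈ Submodule.span ℝ ({1, i'} : Set ℍ[ℝ]))
    (heq : ∀ x y : ℝ, ‖(x : ℍ[ℝ]) + (y : ℍ[ℝ]) * i‖ < 1 →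
      2 * (∑' n : ℕ, ((x : ℍ[ℝ]) + (y : ℍ[ℝ]) * i) ^ n * a n) =
        (1 + c) * (∑' n : ℕ, ((x : ℍ[ℝ]) + (y : ℍ[ℝ]) * i) ^ n * b n) +
        i * ((1 - c) * (∑' n : ℕ, ((x : ℍ[ℝ]) + (y : ℍ[ℝ]) * i) ^ n * b n)) * i)
    (heq' : ∀ x y : ℝ, ‖(x : ℍ[ℝ]) + (y : ℍ[ℝ]) * i'‖ < 1 →
      2 * (∑' n : ℕ, ((x : ℍ[ℝ]) + (y : ℍ[ℝ]) * i') ^ n * a n) =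
        (1 + c') * (∑' n : ℕ, ((x : ℍ[ℝ]) + (y : ℍ[ℝ]) * i') ^ n * b n) +
        i' * ((1 - c') * (∑' n : ℕ, ((x : ℍ[ℝ]) + (y : ℍ[ℝ]) * i') ^ n * b n)) * i') :
    ∀ q : ℍ[ℝ], ‖q‖ < 1 →
      (∑' n : ℕ, q ^ n * a n) = (∑' n : ℕ, q ^ n * b n) := by
  suffices hab : a = b by intro q _; rw [hab]
  have hi2 := mul_self_eq_neg_one hi hni
  have hi2' := mul_self_eq_neg_one hi' hni'
  have hci := commute_of_mem_span_one_self hc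
  have hci' := commute_of_mem_span_one_self hc'
  have hind := linearIndependent_pair_of_norm_eq_one hni hni' hne hne'
  have hslice := two_mul_eq_of_slice ha hb heq
  have hslice' := two_mul_eq_of_slice ha hb heq'
  by_contra hab
  have hc1 : c ≠ 1 := by
    rintro rfl
    exact hab (funext fun n => by simpa [sub_eq_zero, eq_comm] using
      one_sub_mul_sub_mul_mul_self hci (hslice n))
  have hc1' : c' ≠ 1 := by
    rintro rfl
    exact hab (funext fun n => by simpa [sub_eq_zero, eq_comm] using
      one_sub_mul_sub_mul_mul_self hci' (hslice' n))
  have hreal (n : ℕ) : b n - a n = (b n - a n).re :=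
    eq_re_of_commute_of_commute hi hni hi' hni' hind (commute_sub_of_slice hi2 hci (hslice n))
      (commute_sub_of_slice hi2' hci' (hslice' n))
  exact not_forall_re_mul_eq_mul hspan hi hi' hind (fun n => (b n - a n).re) _ _ fun n =>
    ⟨re_mul_eq_of_slice hi2 hci hc1 (hslice n) (hreal n),
      re_mul_eq_of_slice hi2' hci' hc1' (hslice' n) (hreal n)⟩

theorem stmt_19 (a b : ℕ → ℍ[ℝ])
    (ha : ∀ r : ℝ, 0 ≤ r → r < 1 → Summable fun n : ℕ => ‖a n‖ * r ^ n)
    (hb : ∀ r : ℝ, 0 ≤ r → r < 1 → Summable fun n : ℕ => ‖b n‖ * r ^ n)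
    (hspan : ∀ x : ℍ[ℝ], x.re = 0 →
      x ∈ Submodule.span ℝ (Set.range fun n : ℕ => (b n).im))
    (i i' j j' : ℍ[ℝ]) (hi : i.re = 0) (hni : ‖i‖ = 1)
    (hi' : i'.re = 0) (hni' : ‖i'‖ = 1) (hne : i ≠ i') (hne' : i ≠ -i')
    (hj : j.re = 0) (hnj : ‖j‖ = 1) (hij : i * j = -(j * i))
    (hj' : j'.re = 0) (hnj' : ‖j'‖ = 1) (hij' : i' * j' = -(j' * i'))
    (c c' : ℍ[ℝ]) (hc : c ∈ Submodule.span ℝ ({1, i} : Set ℍ[ℝ]))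
    (hc' : c' ∈ Submodule.span ℝ ({1, i'} : Set ℍ[ℝ]))
    (heq : ∀ x y : ℝ, ‖(x : ℍ[ℝ]) + (y : ℍ[ℝ]) * i‖ < 1 →
      2 * (∑' n : ℕ, ((x : ℍ[ℝ]) + (y : ℍ[ℝ]) * i) ^ n * a n) =
        (1 + c) * (∑' n : ℕ, ((x : ℍ[ℝ]) + (y : ℍ[ℝ]) * i) ^ n * b n) +
        i * ((1 - c) * (∑' n : ℕ, ((x : ℍ[ℝ]) + (y : ℍ[ℝ]) * i) ^ n * b n)) * i)
    (heq' : ∀ x y : ℝ, ‖(x : ℍ[ℝ]) + (y : ℍ[ℝ]) * i'‖ < 1 →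
      2 * (∑' n : ℕ, ((x : ℍ[ℝ]) + (y : ℍ[ℝ]) * i') ^ n * a n) =
        (1 + c') * (∑' n : ℕ, ((x : ℍ[ℝ]) + (y : ℍ[ℝ]) * i') ^ n * b n) +
        i' * ((1 - c') * (∑' n : ℕ, ((x : ℍ[ℝ]) + (y : ℍ[ℝ]) * i') ^ n * b n)) * i') :
    ∀ q : ℍ[ℝ], ‖q‖ < 1 →
      (∑' n : ℕ, q ^ n * a n) = (∑' n : ℕ, q ^ n * b n) :=
  stmt_19_general a b ha hb hspan i i' hi hni hi' hni' hne hne' c c' hc hc' heq heq'
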